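/- For any flow f with route of at most K_max links, the total queue backlog along the route is bounded: Σ_{n∈R(f)} Q^f_n ≤ (K_max/μ_{L(f)}) Σ_{(n,m)∈L} μ_{nm} max_{g:(n,m)∈L(g)} (Q^g_n − Q^g_m)⁺, where μ_{L(f)} > 0 is the minimum of μ_{nm} over links (n,m) ∈ L(f). -/

import Mathlib

/-!
Along the route of `f` the backlog `Q^f_n` telescopes down to `Q^f = 0` at the destination, so each
backlog is at most the sum `S` of the positive differentials over the links of the route. At most
`K_max` nodes other than the destination contribute, giving `∑ Q^f_n ≤ K_max S`; and since the links
of a loop-free route are distinct and each has rate at least `μ_{L(f)}`, the maximal differentials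
over all flows give `μ_{L(f)} S ≤ ∑_{(n,m) ∈ L} μ_{nm} max_g (Q^g_n − Q^g_m)⁺`.
-/

open Finset

namespace List

variable {α : Type*}

theorem Nodup.consecutivePairs {l : List α} (h : l.Nodup) : l.consecutivePairs.Nodup :=
  Nodup.of_map Prod.snd <| by
    rw [map_snd_zip (tail_sublist l).length_le]
    exact h.sublist (tail_sublist l)

theorem le_getLast_add_sum_consecutivePairs {β : Type*} [AddCommGroup β] [LinearOrder β]
    [IsOrderedAddMonoid β] (Q : α → β) :
    ∀ {l : List α} (hl : l ≠ []) {n : α}, n ∈ l →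
      Q n ≤ Q (l.getLast hl) + (l.consecutivePairs.map fun p => max (Q p.1 - Q p.2) 0).sum
  | [_], _, _, hn => by simp_all [consecutivePairs]
  | a :: b :: t, _, n, hn => by
    have ih := fun m (hm : m ∈ b :: t) => le_getLast_add_sum_consecutivePairs Q (cons_ne_nil b t) hm
    rw [getLast_cons_cons, show (a :: b :: t).consecutivePairs = (a, b) :: (b :: t).consecutivePairs
      from rfl, map_cons, sum_cons, add_left_comm]
    rcases mem_cons.1 hn with rfl | hn
    · calc Q n = (Q n - Q b) + Q b := (sub_add_cancel _ _).symm
        _ ≤ _ := add_le_add (le_max_left _ _) (ih b mem_cons_self)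
    · exact le_add_of_nonneg_of_le (le_max_right _ _) (ih n hn)

theorem sum_toFinset_le_length_sub_one_nsmul [DecidableEq α] {β : Type*} [AddCommMonoid β]
    [PartialOrder β] [IsOrderedAddMonoid β] {l : List α} (hl : l ≠ []) {Q : α → β} {S : β}
    (hlast : Q (l.getLast hl) = 0) (hQ : ∀ n ∈ l, Q n ≤ S) (hS : 0 ≤ S) :
    ∑ n ∈ l.toFinset, Q n ≤ (l.length - 1) • S := by
  have hmem : l.getLast hl ∈ l.toFinset := mem_toFinset.2 (getLast_mem hl)
  rw [← add_sum_erase _ _ hmem, hlast, zero_add]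
  calc ∑ n ∈ l.toFinset.erase (l.getLast hl), Q n
      ≤ #(l.toFinset.erase (l.getLast hl)) • S :=
        Finset.sum_le_card_nsmul _ _ _ fun n hn => hQ n (mem_toFinset.1 (mem_of_mem_erase hn))
    _ ≤ (l.length - 1) • S := by
        refine nsmul_le_nsmul_left hS ?_
        rw [card_erase_of_mem hmem]
        exact Nat.sub_le_sub_right (toFinset_card_le l) 1

end List

section Network

variable {F Node : Type*} [Fintype F] [DecidableEq Node]

/-- `max_{g : (n,m) ∈ L(g)} (Q^g_n − Q^g_m)⁺`, with the empty maximum read as `0`. -/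
def maxDiffOnLink (route : F → List Node) (Q : F → Node → ℝ) (nm : Node × Node) : ℝ :=
  (univ.filter fun g => nm ∈ (route g).consecutivePairs).fold max 0
    fun g => max (Q g nm.1 - Q g nm.2) 0

theorem maxDiffOnLink_nonneg (route : F → List Node) (Q : F → Node → ℝ) (nm : Node × Node) :
    0 ≤ maxDiffOnLink route Q nm :=
  le_fold_max _ |>.2 (Or.inl le_rfl)

theorem le_maxDiffOnLink {route : F → List Node} (Q : F → Node → ℝ) {f : F} {nm : Node × Node}
    (h : nm ∈ (route f).consecutivePairs) :
    max (Q f nm.1 - Q f nm.2) 0 ≤ maxDiffOnLink route Q nm :=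
  le_fold_max _ |>.2 (Or.inr ⟨f, mem_filter.2 ⟨mem_univ f, h⟩, le_rfl⟩)

theorem mul_sum_le_sum_mul_maxDiffOnLink {route : F → List Node} (Q : F → Node → ℝ)
    {Ledges : Finset (Node × Node)} {μ : Node × Node → ℝ} (hμ : ∀ nm ∈ Ledges, 0 ≤ μ nm)
    {f : F} (hroute : ∀ nm ∈ (route f).consecutivePairs, nm ∈ Ledges) {μL : ℝ} (hμL : 0 ≤ μL)
    (hmin : ∀ nm ∈ (route f).consecutivePairs, μL ≤ μ nm) :
    μL * ∑ nm ∈ (route f).consecutivePairs.toFinset, max (Q f nm.1 - Q f nm.2) 0 ≤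
      ∑ nm ∈ Ledges, μ nm * maxDiffOnLink route Q nm := by
  rw [mul_sum]
  calc ∑ nm ∈ (route f).consecutivePairs.toFinset, μL * max (Q f nm.1 - Q f nm.2) 0
      ≤ ∑ nm ∈ (route f).consecutivePairs.toFinset, μ nm * maxDiffOnLink route Q nm := by
        refine sum_le_sum fun nm hnm => ?_
        rw [List.mem_toFinset] at hnm
        exact mul_le_mul (hmin nm hnm) (le_maxDiffOnLink Q hnm) (le_max_right _ _)
          (hμL.trans (hmin nm hnm))
    _ ≤ ∑ nm ∈ Ledges, μ nm * maxDiffOnLink route Q nm :=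
        sum_le_sum_of_subset_of_nonneg (fun nm hnm => hroute nm (List.mem_toFinset.1 hnm))
          fun nm hnm _ => mul_nonneg (hμ nm hnm) (maxDiffOnLink_nonneg route Q nm)

end Network

theorem stmt_9_general {F Node : Type*} [Fintype F] [DecidableEq Node]
    (route : F → List Node) (hne : ∀ g, route g ≠ [])
    (hnodup : ∀ g, (route g).Nodup)
    (Ledges : Finset (Node × Node))
    (hroute : ∀ g, ∀ nm ∈ (route g).zip (route g).tail, nm ∈ Ledges)
    (Kmax : ℕ)
    (Q : F → Node → ℝ)
    (hdest : ∀ g, Q g ((route g).getLast (hne g)) = 0)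
    (μ : Node × Node → ℝ) (hμ : ∀ nm ∈ Ledges, 0 ≤ μ nm)
    (f : F) (hlen : (route f).length ≤ Kmax + 1)
    (μL : ℝ) (hμL : 0 < μL)
    (hmin : ∀ nm ∈ (route f).zip (route f).tail, μL ≤ μ nm) :
    ∑ n ∈ (route f).toFinset, Q f n ≤
      ((Kmax : ℝ) / μL) * ∑ nm ∈ Ledges, μ nm *
        (univ.filter (fun g => nm ∈ (route g).zip (route g).tail)).fold max 0
          (fun g => max (Q g nm.1 - Q g nm.2) 0) := by
  set S := ∑ nm ∈ (route f).consecutivePairs.toFinset, max (Q f nm.1 - Q f nm.2) 0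
  have hS : 0 ≤ S := sum_nonneg fun _ _ => le_max_right _ _
  have hnode : ∀ n ∈ route f, Q f n ≤ S := fun n hn => by
    simpa only [hdest, zero_add, ← List.sum_toFinset _ (hnodup f).consecutivePairs] using
      List.le_getLast_add_sum_consecutivePairs (Q f) (hne f) hn
  have hlinks : S ≤ (∑ nm ∈ Ledges, μ nm * maxDiffOnLink route Q nm) / μL := by
    rw [le_div_iff₀' hμL]
    exact mul_sum_le_sum_mul_maxDiffOnLink Q hμ (hroute f) hμL.le hmin
  calc ∑ n ∈ (route f).toFinset, Q f n ≤ ((route f).length - 1) • S :=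
        List.sum_toFinset_le_length_sub_one_nsmul (hne f) (hdest f) hnode hS
    _ ≤ Kmax * S := by
        rw [nsmul_eq_mul]
        gcongr
        exact_mod_cast Nat.sub_le_of_le_add hlen
    _ ≤ Kmax * ((∑ nm ∈ Ledges, μ nm * maxDiffOnLink route Q nm) / μL) := by gcongr
    _ = (Kmax / μL) * ∑ nm ∈ Ledges, μ nm * maxDiffOnLink route Q nm := by ring

/-- Total backlog along a flow's route of at most `K_max` links is bounded by
`(K_max/μ_{L(f)}) ∑_{(n,m)∈L} μ_{nm} max_{g:(n,m)∈L(g)} (Q^g_n − Q^g_m)⁺`,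
where `μ_{L(f)} > 0` is the minimum link rate on the route of `f`. -/
theorem stmt_9 {F Node : Type*} [Fintype F] [DecidableEq F]
    [Fintype Node] [DecidableEq Node]
    (route : F → List Node) (hne : ∀ g, route g ≠ [])
    (hnodup : ∀ g, (route g).Nodup)
    (Ledges : Finset (Node × Node))
    (hroute : ∀ g, ∀ nm ∈ (route g).zip (route g).tail, nm ∈ Ledges)
    (Kmax : ℕ) (hK : 1 ≤ Kmax)
    (Q : F → Node → ℝ) (hQ : ∀ g n, 0 ≤ Q g n)
    (hdest : ∀ g, Q g ((route g).getLast (hne g)) = 0)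
    (μ : Node × Node → ℝ) (hμ : ∀ nm ∈ Ledges, 0 ≤ μ nm)
    (f : F) (hlen : (route f).length ≤ Kmax + 1)
    (μL : ℝ) (hμL : 0 < μL)
    (hmin : ∀ nm ∈ (route f).zip (route f).tail, μL ≤ μ nm) :
    ∑ n ∈ (route f).toFinset, Q f n ≤
      ((Kmax : ℝ) / μL) * ∑ nm ∈ Ledges, μ nm *
        (univ.filter (fun g => nm ∈ (route g).zip (route g).tail)).fold max 0
          (fun g => max (Q g nm.1 - Q g nm.2) 0) :=
  stmt_9_general route hne hnodup Ledges hroute Kmax Q hdest μ hμ f hlen μL hμL hmin
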